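/- arXiv:2405.12416 — 3 statements merged into one kernel-verified Lean document; each statement's English description precedes it below -/
import Mathlib

section
/- In the one-variable case (d = 1) with L = w∂_z − z̄∂_{w̄} and R = w̄∂_z − z̄∂_w, one has L^k R^k (z^k) = (−1)^k (k!)² z̄^k for every natural number k. -/
open MvPolynomial

/-- The operator `L = w·∂/∂z − z̄·∂/∂w̄` on polynomials in the four independent
variables `z = X 0`, `w = X 1`, `z̄ = X 2`, `w̄ = X 3`. -/
noncomputable def Lop (f : MvPolynomial (Fin 4) ℂ) : MvPolynomial (Fin 4) ℂ :=
  X 1 * pderiv 0 f - X 2 * pderiv 3 f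

/-- The operator `R = w̄·∂/∂z − z̄·∂/∂w`. -/
noncomputable def Rop (f : MvPolynomial (Fin 4) ℂ) : MvPolynomial (Fin 4) ℂ :=
  X 3 * pderiv 0 f - X 2 * pderiv 1 f

lemma Rop_smul (c : ℂ) (j m : ℕ) :
    Rop (c • ((X 3 : MvPolynomial (Fin 4) ℂ) ^ j * X 0 ^ (m+1))) =
      (((m : ℂ) + 1) * c) • ((X 3 : MvPolynomial (Fin 4) ℂ) ^ (j+1) * X 0 ^ m) := by
  simp only [Rop, map_smul, Derivation.leibniz, pderiv_pow,
    pderiv_X_self, pderiv_X_of_ne (show (3:Fin 4) ≠ 0 by decide),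
    pderiv_X_of_ne (show (0:Fin 4) ≠ 1 by decide),
    pderiv_X_of_ne (show (3:Fin 4) ≠ 1 by decide),
    smul_eq_C_mul, map_mul, map_natCast, map_add, map_one, pderiv_C, smul_eq_mul,
    smul_zero, mul_zero, add_zero, zero_add]
  push_cast
  ring

lemma Lop_smul (c : ℂ) (j m : ℕ) :
    Lop (c • ((X 2 : MvPolynomial (Fin 4) ℂ) ^ j * X 3 ^ (m+1))) =
      (-((m : ℂ) + 1) * c) • ((X 2 : MvPolynomial (Fin 4) ℂ) ^ (j+1) * X 3 ^ m) := by
  simp only [Lop, map_smul, Derivation.leibniz, pderiv_pow,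
    pderiv_X_self, pderiv_X_of_ne (show (2:Fin 4) ≠ 0 by decide),
    pderiv_X_of_ne (show (3:Fin 4) ≠ 0 by decide),
    pderiv_X_of_ne (show (2:Fin 4) ≠ 3 by decide),
    smul_eq_C_mul, map_mul, map_natCast, map_add, map_one, map_neg, pderiv_C,
    smul_eq_mul, smul_zero, mul_zero, add_zero, zero_add]
  push_cast
  ring

lemma Rop_iter (k : ℕ) : ∀ j ≤ k, Rop^[j] ((X 0 : MvPolynomial (Fin 4) ℂ) ^ k) =
    (k.descFactorial j : ℂ) • ((X 3 : MvPolynomial (Fin 4) ℂ) ^ j * X 0 ^ (k - j)) := by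
  intro j hj
  induction j with
  | zero => simp
  | succ j ih =>
    rw [Function.iterate_succ_apply', ih (Nat.le_of_succ_le hj),
      show k - j = (k - (j+1)) + 1 from by omega, Rop_smul]
    congr 1
    rw [Nat.descFactorial_succ]
    push_cast [Nat.cast_sub (show j + 1 ≤ k from hj), Nat.cast_sub (Nat.le_of_succ_le hj),
      Nat.cast_sub (show 1 + j ≤ k from by omega)]
    ring

lemma Lop_iter (c : ℂ) (k : ℕ) : ∀ j ≤ k, Lop^[j] (c • (X 3 : MvPolynomial (Fin 4) ℂ) ^ k) =
    (c * (-1)^j * (k.descFactorial j : ℂ)) • ((X 2 : MvPolynomial (Fin 4) ℂ) ^ j * X 3 ^ (k - j)) := by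
  intro j hj
  induction j with
  | zero => simp
  | succ j ih =>
    rw [Function.iterate_succ_apply', ih (Nat.le_of_succ_le hj),
      show k - j = (k - (j+1)) + 1 from by omega, Lop_smul]
    congr 1
    rw [Nat.descFactorial_succ]
    push_cast [Nat.cast_sub (show j + 1 ≤ k from hj), Nat.cast_sub (Nat.le_of_succ_le hj),
      Nat.cast_sub (show 1 + j ≤ k from by omega)]
    ring

/-- `L^k R^k (z^k) = (−1)^k (k!)² z̄^k`. -/
theorem LkRk_zk (k : ℕ) :
    Lop^[k] (Rop^[k] ((X 0 : MvPolynomial (Fin 4) ℂ) ^ k)) =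
      ((-1 : ℂ) ^ k * (k.factorial : ℂ) ^ 2) • (X 2 : MvPolynomial (Fin 4) ℂ) ^ k := by
  rw [Rop_iter k k le_rfl]
  simp only [Nat.sub_self, pow_zero, mul_one, Nat.descFactorial_self]
  rw [Lop_iter _ k k le_rfl]
  simp only [Nat.sub_self, pow_zero, mul_one, Nat.descFactorial_self]
  congr 1
  ring
end

section
/- Consider monomials z^{α₁}w^{α₂}z̄^{α₃}w̄^{α₄} with multi-indices α_i ∈ ℤ₊^d, |α|=k, subject to the constraints |α₁|+|α₄| = k−a, |α₂|+|α₃| = a, |α₁|+|α₂| = k−b, |α₃|+|α₄| = b. The number of such monomials is Σ_{j=0}^{m} C(k−M−j+d−1, d−1)·C(j+d−1, d−1)·C(m−j+d−1, d−1)·C(M−m+j+d−1, d−1), where m_a = min{a,k−a}, m_b = min{b,k−b}, m = min{m_a,m_b}, M = max{m_a,m_b}. -/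
/-!
Only the degrees `sᵢ = |αᵢ|` enter the constraints, and by stars and bars there are
`C(s + d - 1, d - 1)` multi-indices in `ℤ₊^d` of degree `s`. Permuting the four blocks of variables
realises the symmetries `a ↦ k - a` and `a ↔ b` of the constraints, so one may assume `a ≤ b` and
`a + b ≤ k`; then the admissible degree vectors are exactly `(k - b - j, j, a - j, b - a + j)`
for `0 ≤ j ≤ a`.
-/

open Finset

theorem card_sum_eq_choose (d n : ℕ) (hd : 1 ≤ d) :
    Nat.card {x : Fin d → ℕ // ∑ i, x i = n} = (n + d - 1).choose (d - 1) := by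
  obtain ⟨d, rfl⟩ : ∃ e, d = e + 1 := ⟨d - 1, by omega⟩
  rw [← Nat.card_congr (Sym.equivNatSumOfFintype (Fin (d + 1)) n), Nat.card_eq_fintype_card,
    Sym.card_sym_eq_choose, Fintype.card_fin, show d + 1 + n - 1 = n + d by omega,
    show n + (d + 1) - 1 = n + d by omega, Nat.add_sub_cancel, Nat.choose_symm_add]

instance (d n : ℕ) : Finite {x : Fin d → ℕ // ∑ i, x i = n} :=
  .of_equiv _ (Sym.equivNatSumOfFintype (Fin d) n)

section RowSums

variable {ι : Type*} {d : ℕ}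

def rowSums (α : ι → Fin d → ℕ) : ι → ℕ := fun i => ∑ t, α i t

def rowSumsFiberEquiv (s : ι → ℕ) :
    {α : ι → Fin d → ℕ // rowSums α = s} ≃ ∀ i, {x : Fin d → ℕ // ∑ t, x t = s i} :=
  (Equiv.subtypeEquivRight fun _ => funext_iff).trans
    (Equiv.subtypePiEquivPi (p := fun i (x : Fin d → ℕ) => ∑ t, x t = s i))

instance [Finite ι] (s : ι → ℕ) : Finite {α : ι → Fin d → ℕ // rowSums α = s} :=
  .of_equiv _ (rowSumsFiberEquiv s).symm

theorem card_rowSums_comp_perm (σ : Equiv.Perm ι) (P : (ι → ℕ) → Prop) :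
    Nat.card {α : ι → Fin d → ℕ // P (rowSums α ∘ σ)} =
      Nat.card {α : ι → Fin d → ℕ // P (rowSums α)} :=
  Nat.card_congr (Equiv.subtypeEquiv (Equiv.arrowCongr σ.symm (Equiv.refl _)) fun _ => Iff.rfl)

variable [Fintype ι]

theorem card_rowSums_eq (hd : 1 ≤ d) (s : ι → ℕ) :
    Nat.card {α : ι → Fin d → ℕ // rowSums α = s} = ∏ i, (s i + d - 1).choose (d - 1) := by
  rw [Nat.card_congr (rowSumsFiberEquiv s), Nat.card_pi]
  exact prod_congr rfl fun i _ => card_sum_eq_choose d (s i) hd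

theorem card_rowSums_mem (hd : 1 ≤ d) (S : Finset (ι → ℕ)) :
    Nat.card {α : ι → Fin d → ℕ // rowSums α ∈ S} =
      ∑ s ∈ S, ∏ i, (s i + d - 1).choose (d - 1) := by
  rw [← Nat.card_congr (Equiv.sigmaSubtypeFiberEquivSubtype rowSums (q := (· ∈ S))
    fun _ => Iff.rfl), Nat.card_sigma, ← sum_coe_sort S]
  exact sum_congr rfl fun s _ => card_rowSums_eq hd (s : ι → ℕ)

end RowSums

def IsBidegree (k a b : ℕ) (s : Fin 4 → ℕ) : Prop :=
  s 0 + s 3 = k - a ∧ s 1 + s 2 = a ∧ s 0 + s 1 = k - b ∧ s 2 + s 3 = b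

noncomputable def bidegreeCount (k d a b : ℕ) : ℕ :=
  Nat.card {α : Fin 4 → Fin d → ℕ // IsBidegree k a b (rowSums α)}

theorem isBidegree_comp_swap (k a b : ℕ) (s : Fin 4 → ℕ) :
    IsBidegree k a b (s ∘ Equiv.swap 1 3) ↔ IsBidegree k b a s := by
  simp only [IsBidegree, Function.comp_apply, Equiv.swap_apply_def, Fin.isValue, Fin.reduceEq,
    ↓reduceIte]
  omega

theorem isBidegree_comp_swap_swap (k a b : ℕ) (ha : a ≤ k) (s : Fin 4 → ℕ) :
    IsBidegree k a b (s ∘ (Equiv.swap 0 1 * Equiv.swap 2 3 : Equiv.Perm (Fin 4))) ↔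
      IsBidegree k (k - a) b s := by
  simp only [IsBidegree, Function.comp_apply, Equiv.Perm.coe_mul, Equiv.swap_apply_def,
    Fin.isValue, Fin.reduceEq, ↓reduceIte]
  omega

theorem bidegreeCount_comm (k d a b : ℕ) : bidegreeCount k d b a = bidegreeCount k d a b :=
  (Nat.card_congr (Equiv.subtypeEquivRight fun α =>
    (isBidegree_comp_swap k a b (rowSums α)).symm)).trans
    (card_rowSums_comp_perm _ (IsBidegree k a b))

theorem bidegreeCount_tsub_left (k d a b : ℕ) (ha : a ≤ k) :
    bidegreeCount k d (k - a) b = bidegreeCount k d a b :=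
  (Nat.card_congr (Equiv.subtypeEquivRight fun α =>
    (isBidegree_comp_swap_swap k a b ha (rowSums α)).symm)).trans
    (card_rowSums_comp_perm _ (IsBidegree k a b))

theorem bidegreeCount_min_tsub_left (k d a b : ℕ) (ha : a ≤ k) :
    bidegreeCount k d (min a (k - a)) b = bidegreeCount k d a b := by
  rcases le_total a (k - a) with h | h
  · rw [min_eq_left h]
  · rw [min_eq_right h, bidegreeCount_tsub_left k d a b ha]

theorem bidegreeCount_min_max (k d a b : ℕ) :
    bidegreeCount k d (min a b) (max a b) = bidegreeCount k d a b := by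
  rcases le_total a b with h | h
  · rw [min_eq_left h, max_eq_right h]
  · rw [min_eq_right h, max_eq_left h, bidegreeCount_comm]

theorem isBidegree_iff_mem_image (k a b : ℕ) (hab : a ≤ b) (hk : a + b ≤ k) (s : Fin 4 → ℕ) :
    IsBidegree k a b s ↔ s ∈ (range (a + 1)).image fun j => ![k - b - j, j, a - j, b - a + j] := by
  simp only [IsBidegree, mem_image, mem_range]
  constructor
  · rintro ⟨h03, h12, h01, h23⟩
    refine ⟨s 1, by omega, funext fun i => ?_⟩
    fin_cases i <;>
      simp only [Fin.isValue, Fin.zero_eta, Fin.mk_one, Fin.reduceFinMk, Matrix.cons_val,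
        Matrix.cons_val_zero, Matrix.cons_val_one] <;> omega
  · rintro ⟨j, hj, rfl⟩
    simp only [Fin.isValue, Matrix.cons_val, Matrix.cons_val_zero, Matrix.cons_val_one]
    omega

theorem bidegreeCount_eq_sum (k d a b : ℕ) (hd : 1 ≤ d) (hab : a ≤ b) (hk : a + b ≤ k) :
    bidegreeCount k d a b = ∑ j ∈ range (a + 1),
      (k - b - j + d - 1).choose (d - 1) * (j + d - 1).choose (d - 1) *
        (a - j + d - 1).choose (d - 1) * (b - a + j + d - 1).choose (d - 1) := by
  rw [bidegreeCount, Nat.card_congr (Equiv.subtypeEquivRight fun α =>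
      isBidegree_iff_mem_image k a b hab hk (rowSums α)), card_rowSums_mem hd, sum_image]
  · simp [Fin.prod_univ_four]
  · intro i _ j _ hij
    simpa using congrFun hij 1

/-- The number of monomials `z^{α₁}w^{α₂}z̄^{α₃}w̄^{α₄}` (with `αᵢ ∈ ℤ₊^d`)
satisfying `|α₁|+|α₄| = k−a`, `|α₂|+|α₃| = a`, `|α₁|+|α₂| = k−b`,
`|α₃|+|α₄| = b`, i.e. the dimension of `Hom_k^{(a,b)}(ℍ^d, ℂ)`, equals
`Σ_{j=0}^{m} C(k−M−j+d−1,d−1)·C(j+d−1,d−1)·C(m−j+d−1,d−1)·C(M−m+j+d−1,d−1)`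
where `m = min{min{a,k−a},min{b,k−b}}` and `M = max{min{a,k−a},min{b,k−b}}`. -/
theorem homab_dim (k d a b : ℕ) (hd : 1 ≤ d) (ha : a ≤ k) (hb : b ≤ k) :
    Nat.card {α : Fin 4 → Fin d → ℕ //
        (∑ t, α 0 t) + (∑ t, α 3 t) = k - a ∧
        (∑ t, α 1 t) + (∑ t, α 2 t) = a ∧
        (∑ t, α 0 t) + (∑ t, α 1 t) = k - b ∧
        (∑ t, α 2 t) + (∑ t, α 3 t) = b} =
      ∑ j ∈ Finset.range (min (min a (k - a)) (min b (k - b)) + 1),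
        (k - max (min a (k - a)) (min b (k - b)) - j + d - 1).choose (d - 1) *
          (j + d - 1).choose (d - 1) *
          (min (min a (k - a)) (min b (k - b)) - j + d - 1).choose (d - 1) *
          (max (min a (k - a)) (min b (k - b)) -
              min (min a (k - a)) (min b (k - b)) + j + d - 1).choose (d - 1) := by
  have hsymm : bidegreeCount k d a b =
      bidegreeCount k d (min (min a (k - a)) (min b (k - b)))
        (max (min a (k - a)) (min b (k - b))) := by
    rw [bidegreeCount_min_max, bidegreeCount_min_tsub_left k d a _ ha,
      ← bidegreeCount_comm k d a (min b (k - b)), bidegreeCount_min_tsub_left k d b a hb,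
      bidegreeCount_comm]
  change bidegreeCount k d a b = _
  rw [hsymm]
  exact bidegreeCount_eq_sum k d _ _ hd min_le_max (by omega)
end

section
/- For d > 1 and 0 ≤ a,b ≤ k, with m = min{min{a,k−a}, min{b,k−b}} and M = max{min{a,k−a}, min{b,k−b}}, one has the identity Σ_{j=0}^m C(k−M−j+d−1,d−1)C(j+d−1,d−1)C(m−j+d−1,d−1)C(M−m+j+d−1,d−1) − Σ_{j=0}^{m−1} C(k−M−j+d−2,d−1)C(j+d−1,d−1)C(m−j+d−2,d−1)C(M−m+j+d−1,d−1) = Σ_{j=0}^{m} C(j+d−1,d−1)·C(M−m+j+d−1,d−1)·(m−j+1)_{d−2}·(k−M−j+1)_{d−2}·(k−M+m−2j+d−1)/((d−1)!(d−2)!). -/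
/-!
Both sides are sums over `j ≤ m` (the `j = m` term of the subtracted sum vanishes), and they agree
term by term. With `p = k − M − j`, `q = m − j` and `e = d − 2`, Pascal's rule together with the
absorption identity `(e + 1) C(n + e, e + 1) = n C(n + e, e)` gives
`(e + 1) (C(p+e+1, e+1) C(q+e+1, e+1) − C(p+e, e+1) C(q+e, e+1))
  = C(p+e, e) C(q+e, e) (p + q + e + 1)`,
and `(n + 1)_e = e! C(n + e, e)` turns the right-hand side into the rising factorials of the claim.
-/

open Finset

/-- The rising factorial (Pochhammer symbol) `(x)_n = x(x+1)⋯(x+n−1)`. -/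
def risingFac (x : ℤ) : ℕ → ℤ
  | 0 => 1
  | n + 1 => risingFac x n * (x + n)

open Nat

theorem risingFac_natCast (n r : ℕ) : risingFac n r = n.ascFactorial r := by
  induction r with
  | zero => rfl
  | succ r ih => rw [risingFac, ih, ascFactorial_succ]; push_cast; ring

theorem risingFac_natCast_add_one (n r : ℕ) :
    risingFac (n + 1) r = r ! * (n + r).choose r := by
  simpa [ascFactorial_eq_factorial_mul_choose] using risingFac_natCast (n + 1) r

theorem choose_mul_choose_sub_choose_mul_choose (p q e : ℕ) :
    ((e : ℚ) + 1) * ((p + e + 1).choose (e + 1) * (q + e + 1).choose (e + 1) -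
        (p + e).choose (e + 1) * (q + e).choose (e + 1)) =
      (p + e).choose e * (q + e).choose e * (p + q + e + 1) := by
  have absorb (n : ℕ) : ((e : ℚ) + 1) * (n + e).choose (e + 1) = (n + e).choose e * n := by
    have h := choose_succ_right_eq (n + e) e
    rw [Nat.add_sub_cancel] at h
    rw [mul_comm]; exact_mod_cast h
  have pascal (n : ℕ) :
      ((n + e + 1).choose (e + 1) : ℚ) = (n + e).choose e + (n + e).choose (e + 1) := by
    exact_mod_cast choose_succ_succ' (n + e) e
  rw [pascal p, pascal q]
  linear_combination ((p + e).choose e : ℚ) * absorb q + ((q + e).choose e : ℚ) * absorb p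

theorem choose_mul_choose_sub_choose_mul_choose_eq_risingFac (p q d : ℕ) (hd : 1 < d) :
    ((p + d - 1).choose (d - 1) * (q + d - 1).choose (d - 1) -
        (p + d - 2).choose (d - 1) * (q + d - 2).choose (d - 1) : ℚ) =
      risingFac (q + 1) (d - 2) * risingFac (p + 1) (d - 2) * (p + q + d - 1) /
        ((d - 1)! * (d - 2)!) := by
  obtain ⟨e, rfl⟩ : ∃ e, d = e + 2 := ⟨d - 2, by omega⟩
  simp only [show ∀ n, n + (e + 2) - 1 = n + e + 1 from fun n => by omega,
    show ∀ n, n + (e + 2) - 2 = n + e from fun n => by omega, show e + 2 - 1 = e + 1 from rfl,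
    Nat.add_sub_cancel,
    risingFac_natCast_add_one]
  rw [eq_div_iff (by positivity), factorial_succ]
  push_cast
  linear_combination (e ! : ℚ) * (e ! : ℚ) * choose_mul_choose_sub_choose_mul_choose p q e

theorem sum_choose_sub_sum_choose_eq_sum_risingFac (k m M d : ℕ) (hd : 1 < d) (hmM : m + M ≤ k) :
    (∑ j ∈ range (m + 1),
          (((k - M - j + d - 1).choose (d - 1) * (j + d - 1).choose (d - 1) *
            (m - j + d - 1).choose (d - 1) * (M - m + j + d - 1).choose (d - 1) : ℕ) : ℚ)) -
      (∑ j ∈ range m,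
          (((k - M - j + d - 2).choose (d - 1) * (j + d - 1).choose (d - 1) *
            (m - j + d - 2).choose (d - 1) * (M - m + j + d - 1).choose (d - 1) : ℕ) : ℚ)) =
    ∑ j ∈ range (m + 1),
        (((j + d - 1).choose (d - 1) : ℚ) * ((M - m + j + d - 1).choose (d - 1) : ℚ) *
          ((risingFac ((m : ℤ) - j + 1) (d - 2) : ℤ) : ℚ) *
          ((risingFac ((k : ℤ) - M - j + 1) (d - 2) : ℤ) : ℚ) *
          ((k : ℚ) - M + m - 2 * j + d - 1)) / (((d - 1)! : ℚ) * ((d - 2)! : ℚ)) := by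
  have extend : (∑ j ∈ range m,
        (((k - M - j + d - 2).choose (d - 1) * (j + d - 1).choose (d - 1) *
          (m - j + d - 2).choose (d - 1) * (M - m + j + d - 1).choose (d - 1) : ℕ) : ℚ)) =
      ∑ j ∈ range (m + 1),
        (((k - M - j + d - 2).choose (d - 1) * (j + d - 1).choose (d - 1) *
          (m - j + d - 2).choose (d - 1) * (M - m + j + d - 1).choose (d - 1) : ℕ) : ℚ) := by
    rw [sum_range_succ, Nat.sub_self, zero_add, choose_eq_zero_of_lt (by omega : d - 2 < d - 1)]
    simp
  rw [extend, ← sum_sub_distrib]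
  refine sum_congr rfl fun j hj => ?_
  have hjm : j ≤ m := Nat.lt_succ_iff.mp (mem_range.mp hj)
  have hq : ((m : ℤ) - j + 1) = ((m - j : ℕ) : ℤ) + 1 := by omega
  have hp : ((k : ℤ) - M - j + 1) = ((k - M - j : ℕ) : ℤ) + 1 := by omega
  have hlin : (k : ℚ) - M + m - 2 * j + d - 1 = ((k - M - j : ℕ) : ℚ) + (m - j : ℕ) + d - 1 := by
    rw [Nat.cast_sub (by omega : j ≤ k - M), Nat.cast_sub (by omega : M ≤ k), Nat.cast_sub hjm]
    ring
  have key := choose_mul_choose_sub_choose_mul_choose_eq_risingFac (k - M - j) (m - j) d hd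
  rw [hq, hp, hlin]
  push_cast at key ⊢
  linear_combination ((j + d - 1).choose (d - 1) * (M - m + j + d - 1).choose (d - 1) : ℚ) * key

/-- For `d > 1` and `0 ≤ a,b ≤ k`, with `m = min{min{a,k−a},min{b,k−b}}` and
`M = max{min{a,k−a},min{b,k−b}}`:
`dim Hom_k^{(a,b)} − dim Hom_{k−2}^{(a−1,b−1)} = F(k,m,M,d)` in closed form. -/
theorem harm_dim_closed_form (k d a b : ℕ) (hd : 1 < d) (ha : a ≤ k) (hb : b ≤ k) :
    (∑ j ∈ Finset.range (min (min a (k - a)) (min b (k - b)) + 1),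
          (((k - max (min a (k - a)) (min b (k - b)) - j + d - 1).choose (d - 1) *
            (j + d - 1).choose (d - 1) *
            (min (min a (k - a)) (min b (k - b)) - j + d - 1).choose (d - 1) *
            (max (min a (k - a)) (min b (k - b)) -
              min (min a (k - a)) (min b (k - b)) + j + d - 1).choose (d - 1) : ℕ) : ℚ)) -
      (∑ j ∈ Finset.range (min (min a (k - a)) (min b (k - b))),
          (((k - max (min a (k - a)) (min b (k - b)) - j + d - 2).choose (d - 1) *
            (j + d - 1).choose (d - 1) *
            (min (min a (k - a)) (min b (k - b)) - j + d - 2).choose (d - 1) *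
            (max (min a (k - a)) (min b (k - b)) -
              min (min a (k - a)) (min b (k - b)) + j + d - 1).choose (d - 1) : ℕ) : ℚ)) =
    ∑ j ∈ Finset.range (min (min a (k - a)) (min b (k - b)) + 1),
        (((j + d - 1).choose (d - 1) : ℚ) *
          ((max (min a (k - a)) (min b (k - b)) -
              min (min a (k - a)) (min b (k - b)) + j + d - 1).choose (d - 1) : ℚ) *
          ((risingFac ((min (min a (k - a)) (min b (k - b)) : ℤ) - j + 1) (d - 2) : ℤ) : ℚ) *
          ((risingFac ((k : ℤ) - max (min a (k - a)) (min b (k - b)) - j + 1) (d - 2) : ℤ) : ℚ) *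
          ((k : ℚ) - max (min a (k - a)) (min b (k - b)) +
              min (min a (k - a)) (min b (k - b)) - 2 * j + d - 1)) /
        (((d - 1).factorial : ℚ) * ((d - 2).factorial : ℚ)) := by
  have hmin : (min (min a (k - a)) (min b (k - b)) : ℤ) =
      ((min (min a (k - a)) (min b (k - b)) : ℕ) : ℤ) := by
    push_cast [Nat.cast_sub ha, Nat.cast_sub hb]; rfl
  rw [hmin]
  exact sum_choose_sub_sum_choose_eq_sum_risingFac k _ _ d hd (by omega)
end
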